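/- In the q-boson algebra with relations k b_± = q^{±1} b_± k, b_+ b_- = 1 - k, b_- b_+ = 1 - q k, acting on the Fock space with b_+|m⟩=|m+1⟩, b_-|m⟩=(1-q^m)|m-1⟩, k|m⟩=q^m|m⟩ and trace Tr(X)=Σ_{m≥0}⟨m|X|m⟩/(q;q)_m with pairing ⟨m|m'⟩=δ_{m,m'}(q;q)_m, one has Tr(k^{m_2} b_-^{m_1} b_+^{m_1}) = (q;q)_{m_1}(q;q)_{m_2-1}/(q;q)_{m_1+m_2} for all m_1 ≥ 0 and m_2 ≥ 1. -/

import Mathlib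

open scoped BigOperators

noncomputable section

/-- The q-Pochhammer symbol `(z;q)_m = ∏_{j=0}^{m-1} (1 - z q^j)`. -/
def qP (q z : ℝ) (m : ℕ) : ℝ := ∏ j ∈ Finset.range m, (1 - z * q ^ j)

/-- The Fock space `F = ⊕_{m≥0} ℂ|m⟩`, realized as coefficient sequences:
`v : ℕ → ℝ` stands for the vector `∑_m v m · |m⟩`. -/
abbrev Fock : Type := ℕ → ℝ

/-- The creation operator `b₊`, with `b₊|m⟩ = |m+1⟩`. -/
def Bp : Module.End ℝ Fock where
  toFun v := fun i => if i = 0 then 0 else v (i - 1)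
  map_add' x y := by funext i; by_cases h : i = 0 <;> simp [h]
  map_smul' c x := by funext i; by_cases h : i = 0 <;> simp [h]

/-- The annihilation operator `b₋`, with `b₋|m⟩ = (1-q^m)|m-1⟩`. -/
def Bm (q : ℝ) : Module.End ℝ Fock where
  toFun v := fun i => (1 - q ^ (i + 1)) * v (i + 1)
  map_add' x y := by funext i; simp [mul_add]
  map_smul' c x := by funext i; simp; ring

/-- The operator `k`, with `k|m⟩ = q^m|m⟩`. -/
def Kop (q : ℝ) : Module.End ℝ Fock where
  toFun v := fun i => q ^ i * v i
  map_add' x y := by funext i; simp [mul_add]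
  map_smul' c x := by funext i; simp; ring

/-- The basis vector `|m⟩`. -/
def fock (m : ℕ) : Fock := fun i => if i = m then 1 else 0

/-- The trace `Tr(X) = ∑_{m≥0} ⟨m|X|m⟩/(q;q)_m`, with pairing
`⟨m|m'⟩ = δ_{m,m'}(q;q)_m`; equivalently the sum of diagonal coefficients. -/
def Tr (X : Module.End ℝ Fock) : ℝ := ∑' m : ℕ, X (fock m) m

/-!
Writing `|m⟩` for the basis, `k^{m₂} b₋^{m₁} b₊^{m₁}|m⟩ = (q^{m₂})^m (q^{m+1};q)_{m₁} |m⟩`,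
so the trace is `S_{m₁}(q^{m₂})` with `S_n(z) = ∑_m z^m (q^{m+1};q)_n`. Splitting off the last
factor of the Pochhammer symbol gives `S_{n+1}(z) = S_n(z) - q^{n+1} S_n(zq)`, and induction on `n`
starting from the geometric series yields `S_n(z) = (q;q)_n / (z;q)_{n+1}` for `|z| < 1`.
-/

section Pochhammer

variable {q z : ℝ}

lemma qP_zero (q z : ℝ) : qP q z 0 = 1 := Finset.prod_range_zero _

lemma qP_succ (q z : ℝ) (n : ℕ) : qP q z (n + 1) = qP q z n * (1 - z * q ^ n) :=
  Finset.prod_range_succ _ _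

lemma qP_succ' (q z : ℝ) (n : ℕ) : qP q z (n + 1) = (1 - z) * qP q (z * q) n := by
  rw [qP, Finset.prod_range_succ', mul_comm, pow_zero, mul_one]
  simp only [qP, pow_succ', mul_assoc]

lemma qP_add (q z : ℝ) (a b : ℕ) : qP q z (a + b) = qP q z a * qP q (z * q ^ a) b := by
  simp only [qP, Finset.prod_range_add, pow_add, mul_assoc]

lemma one_sub_mul_pow_ne_zero (hq : |q| ≤ 1) (hz : |z| < 1) (j : ℕ) : 1 - z * q ^ j ≠ 0 := by
  refine sub_ne_zero.mpr fun h => ?_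
  have : |z * q ^ j| < 1 := by
    rw [abs_mul, abs_pow]
    exact (mul_le_of_le_one_right (abs_nonneg z) (pow_le_one₀ (abs_nonneg q) hq)).trans_lt hz
  rw [← h, abs_one] at this
  exact this.false

lemma qP_ne_zero (hq : |q| ≤ 1) (hz : |z| < 1) (n : ℕ) : qP q z n ≠ 0 :=
  Finset.prod_ne_zero_iff.mpr fun j _ => one_sub_mul_pow_ne_zero hq hz j

lemma abs_qP_le (hq : |q| ≤ 1) (hz : |z| ≤ 1) (n : ℕ) : |qP q z n| ≤ 2 ^ n := by
  induction n with
  | zero => simp [qP_zero]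
  | succ n ih =>
    have hfactor : |1 - z * q ^ n| ≤ 2 := by
      have : |z * q ^ n| ≤ 1 := by
        rw [abs_mul, abs_pow]
        exact mul_le_one₀ hz (by positivity) (pow_le_one₀ (abs_nonneg q) hq)
      linarith [abs_sub (1 : ℝ) (z * q ^ n), abs_one (α := ℝ)]
    rw [qP_succ, abs_mul, pow_succ]
    exact mul_le_mul ih hfactor (abs_nonneg _) (by positivity)

lemma summable_pow_mul_qP (hq : |q| ≤ 1) (hz : |z| < 1) (n : ℕ) :
    Summable fun m : ℕ => z ^ m * qP q (q ^ (m + 1)) n := by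
  refine Summable.of_norm_bounded
    ((summable_geometric_of_lt_one (abs_nonneg z) hz).mul_left (2 ^ n)) fun m => ?_
  have hqm : |q ^ (m + 1)| ≤ 1 := by
    rw [abs_pow]
    exact pow_le_one₀ (abs_nonneg q) hq
  rw [Real.norm_eq_abs, abs_mul, abs_pow, mul_comm]
  exact mul_le_mul_of_nonneg_right (abs_qP_le hq hqm n) (by positivity)

theorem tsum_pow_mul_qP (hq : |q| ≤ 1) (hz : |z| < 1) (n : ℕ) :
    ∑' m : ℕ, z ^ m * qP q (q ^ (m + 1)) n = qP q q n / qP q z (n + 1) := by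
  induction n generalizing z with
  | zero =>
    simp only [qP_zero, mul_one, zero_add, qP_succ, one_mul, pow_zero,
      tsum_geometric_of_abs_lt_one hz, one_div]
  | succ k ih =>
    have hzq : |z * q| < 1 := by
      rw [abs_mul]
      exact (mul_le_of_le_one_right (abs_nonneg z) hq).trans_lt hz
    have hrec : ∀ m : ℕ, z ^ m * qP q (q ^ (m + 1)) (k + 1)
        = z ^ m * qP q (q ^ (m + 1)) k - q ^ (k + 1) * ((z * q) ^ m * qP q (q ^ (m + 1)) k) := by
      intro m
      rw [qP_succ]
      ring
    rw [tsum_congr hrec, Summable.tsum_sub (summable_pow_mul_qP hq hz k)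
      ((summable_pow_mul_qP hq hzq k).mul_left _), tsum_mul_left, ih hz, ih hzq]
    have h1 : 1 - z ≠ 0 := by simpa using one_sub_mul_pow_ne_zero hq hz 0
    have hR : qP q (z * q) k ≠ 0 := qP_ne_zero hq hzq k
    have h2 : 1 - z * q * q ^ k ≠ 0 := one_sub_mul_pow_ne_zero hq hzq k
    rw [qP_succ' q z (k + 1), qP_succ' q z k, qP_succ q (z * q) k, qP_succ q q k]
    field_simp
    ring

end Pochhammer

section FockAction

variable (q : ℝ)

lemma fock_self (m : ℕ) : fock m m = 1 := if_pos rfl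

lemma Bp_pow_fock (n m : ℕ) : (Bp ^ n) (fock m) = fock (m + n) := by
  induction n with
  | zero => rfl
  | succ n ih =>
    rw [pow_succ', Module.End.mul_apply, ih, ← add_assoc]
    funext i
    cases i <;> simp [Bp, fock]

lemma Bm_fock_succ (m : ℕ) : Bm q (fock (m + 1)) = (1 - q ^ (m + 1)) • fock m := by
  funext i
  by_cases h : i = m <;> simp [Bm, fock, h]

lemma Bm_pow_fock (n m : ℕ) : (Bm q ^ n) (fock (m + n)) = qP q (q ^ (m + 1)) n • fock m := by
  induction n with
  | zero => simp [qP_zero]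
  | succ n ih =>
    rw [pow_succ, Module.End.mul_apply, ← add_assoc, Bm_fock_succ, map_smul, ih, smul_smul,
      qP_succ, ← pow_add, add_right_comm, mul_comm]

lemma Kop_pow_fock (n m : ℕ) : (Kop q ^ n) (fock m) = (q ^ m) ^ n • fock m := by
  induction n with
  | zero => simp
  | succ n ih =>
    have hKop : Kop q (fock m) = q ^ m • fock m := by
      funext i
      by_cases h : i = m <;> simp [Kop, fock, h]
    rw [pow_succ', Module.End.mul_apply, ih, map_smul, hKop, smul_smul, pow_succ]

lemma Kop_pow_mul_Bm_pow_mul_Bp_pow_fock (m₁ m₂ m : ℕ) :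
    (Kop q ^ m₂ * Bm q ^ m₁ * Bp ^ m₁) (fock m)
      = ((q ^ m₂) ^ m * qP q (q ^ (m + 1)) m₁) • fock m := by
  rw [Module.End.mul_apply, Module.End.mul_apply, Bp_pow_fock, Bm_pow_fock, map_smul,
    Kop_pow_fock, smul_smul, ← pow_mul, ← pow_mul, mul_comm m m₂, mul_comm]

end FockAction

/-- The trace formula (utk):
`Tr(k^{m₂} b₋^{m₁} b₊^{m₁}) = (q;q)_{m₁}(q;q)_{m₂-1}/(q;q)_{m₁+m₂}`
for `m₁ ≥ 0`, `m₂ ≥ 1`. -/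
theorem trace_formula (q : ℝ) (hq0 : 0 < q) (hq1 : q < 1)
    (m1 m2 : ℕ) (hm2 : 1 ≤ m2) :
    Tr ((Kop q) ^ m2 * (Bm q) ^ m1 * Bp ^ m1)
      = qP q q m1 * qP q q (m2 - 1) / qP q q (m1 + m2) := by
  have hq : |q| < 1 := abs_lt.mpr ⟨by linarith, hq1⟩
  have hqm2 : |q ^ m2| < 1 := by
    rw [abs_pow]
    exact pow_lt_one₀ (abs_nonneg q) hq (by omega)
  have hTr : Tr (Kop q ^ m2 * Bm q ^ m1 * Bp ^ m1)
      = ∑' m : ℕ, (q ^ m2) ^ m * qP q (q ^ (m + 1)) m1 :=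
    tsum_congr fun m => by
      rw [Kop_pow_mul_Bm_pow_mul_Bp_pow_fock, Pi.smul_apply, fock_self, smul_eq_mul, mul_one]
  have hsplit : qP q q (m1 + m2) = qP q q (m2 - 1) * qP q (q ^ m2) (m1 + 1) := by
    rw [show m1 + m2 = m2 - 1 + (m1 + 1) by omega, qP_add, ← pow_succ', Nat.sub_add_cancel hm2]
  rw [hTr, tsum_pow_mul_qP hq.le hqm2 m1, hsplit]
  have hden := qP_ne_zero hq.le hq (m2 - 1)
  field_simp
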